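/- Let 2 ≤ i ≤ n and let ε and ε' be sign vectors that differ at exactly the index i (i.e., ε'_i = −ε_i and ε'_l = ε_l for l ≠ i). Then Y^ε_i ∩ Y^{ε'}_{i−1} = F^ε_{i,i} = F^{ε'}_{i−1,i}. -/
import Mathlib


noncomputable section

open Set

/-- The brick `Y^ε_i ⊆ S^n` (coordinate indices are 0-based, so the 1-based
condition `k ≤ i` becomes `(k : ℕ) < i`, and `k ≥ i+1` becomes `i ≤ (k : ℕ)`). -/
def Ybrick (n : ℕ) (ε : Fin (n + 1) → ℝ) (i : ℕ) : Set (EuclideanSpace ℝ (Fin (n + 1))) :=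
  {v | ‖v‖ = 1 ∧ (∀ k, 0 ≤ ε k * v k) ∧
    (∃ k : Fin (n + 1), (k : ℕ) < i ∧ v k ≠ 0) ∧
    (∃ k : Fin (n + 1), i ≤ (k : ℕ) ∧ v k ≠ 0)}

/-- The `j`-th face `F^ε_{i,j}` of `Y^ε_i`. -/
def Fface (n : ℕ) (ε : Fin (n + 1) → ℝ) (i : ℕ) (j : Fin (n + 1)) :
    Set (EuclideanSpace ℝ (Fin (n + 1))) :=
  {v ∈ Ybrick n ε i | v j = 0}

/-- For `2 ≤ i ≤ n`, if `ε'` differs from `ε` exactly at the `i`-th coordinate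
(the 0-based index `k` with `(k : ℕ) + 1 = i`), then
`Y^ε_i ∩ Y^{ε'}_{i-1} = F^ε_{i,i} = F^{ε'}_{i-1,i}`. -/
theorem Ybrick_inter_Ybrick_down (n : ℕ) (hn : 1 ≤ n) (i : ℕ) (hi2 : 2 ≤ i) (hin : i ≤ n)
    (ε ε' : Fin (n + 1) → ℝ) (hε : ∀ k, ε k = 1 ∨ ε k = -1)
    (hε' : ∀ k, ε' k = 1 ∨ ε' k = -1) (k : Fin (n + 1)) (hk : (k : ℕ) + 1 = i)
    (hflip : ε' k = -ε k) (hagree : ∀ l : Fin (n + 1), l ≠ k → ε' l = ε l) :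
    Ybrick n ε i ∩ Ybrick n ε' (i - 1) = Fface n ε i k ∧
      Fface n ε i k = Fface n ε' (i - 1) k := by
  constructor
  · ext v
    simp only [Ybrick, Fface, mem_inter_iff, mem_setOf_eq, mem_sep_iff]
    constructor
    · rintro ⟨⟨hn1, hpos, hex1, hex2⟩, _, hpos', _, _⟩
      refine ⟨⟨hn1, hpos, hex1, hex2⟩, ?_⟩
      have h1 := hpos k
      have h2 := hpos' k
      rw [hflip] at h2
      rcases hε k with h | h <;> rw [h] at h1 h2 <;> linarith
    · rintro ⟨⟨hn1, hpos, ⟨m, hm, hvm⟩, ⟨m', hm', hvm'⟩⟩, hvk⟩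
      have hmk : (m : ℕ) ≠ (k : ℕ) := fun h => hvm ((Fin.ext h : m = k) ▸ hvk)
      refine ⟨⟨hn1, hpos, ⟨m, hm, hvm⟩, ⟨m', hm', hvm'⟩⟩, hn1, ?_,
        ⟨m, by omega, hvm⟩, ⟨m', by omega, hvm'⟩⟩
      intro l
      by_cases hl : l = k
      · subst hl; rw [hvk]; simp
      · rw [hagree l hl]; exact hpos l
  · ext v
    simp only [Fface, Ybrick, mem_sep_iff, mem_setOf_eq]
    constructor
    · rintro ⟨⟨hn1, hpos, ⟨m, hm, hvm⟩, ⟨m', hm', hvm'⟩⟩, hvk⟩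
      have hmk : (m : ℕ) ≠ (k : ℕ) := fun h => hvm ((Fin.ext h : m = k) ▸ hvk)
      refine ⟨⟨hn1, ?_, ⟨m, by omega, hvm⟩, ⟨m', by omega, hvm'⟩⟩, hvk⟩
      intro l
      by_cases hl : l = k
      · subst hl; rw [hvk]; simp
      · rw [hagree l hl]; exact hpos l
    · rintro ⟨⟨hn1, hpos, ⟨m, hm, hvm⟩, ⟨m', hm', hvm'⟩⟩, hvk⟩
      have hmk : (m' : ℕ) ≠ (k : ℕ) := fun h => hvm' ((Fin.ext h : m' = k) ▸ hvk)
      refine ⟨⟨hn1, ?_, ⟨m, by omega, hvm⟩, ⟨m', by omega, hvm'⟩⟩, hvk⟩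
      intro l
      by_cases hl : l = k
      · subst hl; rw [hvk]; simp
      · rw [← hagree l hl]; exact hpos l
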